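/- For any n ≥ 1, the polynomial P_{(n)}(x_1, ..., x_n) := sum over compositions β = (β_1, ..., β_s) of n of (-1)^{n - s}·x_1^{β_1}·x_2^{β_2}···x_s^{β_s} equals sum_{m=0}^{n-1} (-1)^m · x_1 x_2 ··· x_{n-m} · h_m(x_1, ..., x_{n-m}), where h_m is the complete homogeneous symmetric polynomial of degree m. -/
import Mathlib


/-- The complete homogeneous symmetric polynomial `h_m(x_1, …, x_k)` in a commutative ring:
the sum over all monomials of degree `m` in `x_1, …, x_k` (indexed `1`-based via `x`). -/
def hfull {R : Type*} [CommRing R] (k m : ℕ) (x : ℕ → R) : R :=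
  ∑ d ∈ Finset.Nat.antidiagonalTuple k m, ∏ i : Fin k, x (i.val + 1) ^ d i

private lemma sig_ext {n a b : ℕ} (h : a = b) {f : Fin (n - a) → ℕ} {g : Fin (n - b) → ℕ}
    (hfg : ∀ k (h1 : k < n - a) (h2 : k < n - b), f ⟨k, h1⟩ = g ⟨k, h2⟩) :
    (⟨a, f⟩ : Σ m : ℕ, Fin (n - m) → ℕ) = ⟨b, g⟩ := by
  subst h
  exact congrArg _ (funext fun j => (Fin.eta j j.2) ▸ hfg j.1 j.2 j.2)

private lemma prodIcc {R : Type*} [CommRing R] (x : ℕ → R) (s : ℕ) :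
    ∏ i ∈ Finset.Icc 1 s, x i = ∏ i : Fin s, x (i.val + 1) := by
  induction s with
  | zero => simp
  | succ s ih =>
    rw [Finset.prod_Icc_succ_top (by omega), ih, Fin.prod_univ_castSucc]
    simp

/-- For `n ≥ 1`, the polynomial identity
`∑_{β ⊨ n} (-1)^{n - ℓ(β)} x_1^{β_1} ⋯ x_{ℓ(β)}^{β_{ℓ(β)}}
  = ∑_{m=0}^{n-1} (-1)^m x_1 ⋯ x_{n-m} · h_m(x_1, …, x_{n-m})`,
the sum on the left being over all compositions `β` of `n`. -/
theorem stmt16 (n : ℕ) (hn : 1 ≤ n) {R : Type*} [CommRing R] (x : ℕ → R) :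
    (∑ β : Composition n,
        (-1 : R) ^ (n - β.length) * ∏ i : Fin β.length, x (i.val + 1) ^ β.blocksFun i) =
      ∑ m ∈ Finset.range n,
        (-1 : R) ^ m * (∏ i ∈ Finset.Icc 1 (n - m), x i) * hfull (n - m) m x := by
  classical
  have hr : (∑ m ∈ Finset.range n,
        (-1 : R) ^ m * (∏ i ∈ Finset.Icc 1 (n - m), x i) * hfull (n - m) m x)
      = ∑ p ∈ (Finset.range n).sigma (fun m => Finset.Nat.antidiagonalTuple (n - m) m),
        (-1 : R) ^ p.1 * (∏ i ∈ Finset.Icc 1 (n - p.1), x i) *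
          ∏ i : Fin (n - p.1), x (i.val + 1) ^ p.2 i := by
    rw [Finset.sum_sigma]
    simp [hfull, Finset.mul_sum]
  rw [hr]
  refine Finset.sum_bij'
    (i := fun β _ => (⟨n - β.length,
      fun j => β.blocksFun ⟨j.1, by omega⟩ - 1⟩ :
        Σ m, Fin (n - m) → ℕ))
    (j := fun p hp => ⟨List.ofFn (fun i : Fin (n - p.1) => p.2 i + 1),
      by intro i hi; simp [List.mem_ofFn] at hi; obtain ⟨j, hj⟩ := hi; omega,
      by
        have hp' := Finset.mem_sigma.mp hp
        have h1 : p.1 < n := Finset.mem_range.mp hp'.1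
        have h2 : ∑ i, p.2 i = p.1 := (Finset.Nat.mem_antidiagonalTuple).mp hp'.2
        simp [List.sum_ofFn, Finset.sum_add_distrib, h2]
        omega⟩)
    ?_ ?_ ?_ ?_ ?_
  · intro β _
    have hlen : β.length ≤ n := β.length_le
    have hpos : 0 < β.length := β.length_pos_of_pos hn
    refine Finset.mem_sigma.mpr ⟨Finset.mem_range.mpr (show n - β.length < n by omega), ?_⟩
    rw [Finset.Nat.mem_antidiagonalTuple]
    have hcast : n - (n - β.length) = β.length := by omega
    have hsum : ∑ j : Fin (n - (n - β.length)), β.blocksFun (Fin.cast hcast j) = n := by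
      rw [Fin.sum_congr' _ hcast, β.sum_blocksFun]
    show ∑ j : Fin (n - (n - β.length)), (β.blocksFun (Fin.cast hcast j) - 1) = n - β.length
    have hstep : ∑ j : Fin (n - (n - β.length)),
        (β.blocksFun (Fin.cast hcast j) - 1 + 1)
        = ∑ j : Fin (n - (n - β.length)), β.blocksFun (Fin.cast hcast j) :=
      Finset.sum_congr rfl fun j _ => Nat.succ_pred_eq_of_pos (β.one_le_blocksFun _)
    rw [Finset.sum_add_distrib] at hstep
    simp only [Finset.sum_const, Finset.card_univ, Fintype.card_fin, smul_eq_mul,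
      mul_one] at hstep
    omega
  · intro p hp; exact Finset.mem_univ _
  · intro β _
    have hlen : β.length ≤ n := β.length_le
    ext1
    dsimp only
    have hcast : n - (n - β.length) = β.length := by omega
    rw [← β.ofFn_blocksFun]
    apply List.ext_getElem
    · simp [hcast]
    · intro k h1 h2
      simp only [List.getElem_ofFn]
      exact Nat.succ_pred_eq_of_pos (β.one_le_blocksFun _)
  · intro p hp
    have hp' := Finset.mem_sigma.mp hp
    have h1 : p.1 < n := Finset.mem_range.mp hp'.1
    have hlen : (List.ofFn (fun i : Fin (n - p.1) => p.2 i + 1)).length = n - p.1 := by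
      simp
    have hfst : n - (List.ofFn (fun i : Fin (n - p.1) => p.2 i + 1)).length = p.1 := by
      rw [hlen]; omega
    obtain ⟨m, d⟩ := p
    refine sig_ext hfst ?_
    intro k hk1 hk2
    simp only [Composition.blocksFun, Composition.length]
    rw [List.get_ofFn]
    simp
  · intro β _
    dsimp only
    have hlen : β.length ≤ n := β.length_le
    have hpos : 0 < β.length := β.length_pos_of_pos hn
    have hcast : n - (n - β.length) = β.length := by omega
    rw [prodIcc]
    rw [mul_assoc, ← Finset.prod_mul_distrib]
    symm
    congr 1
    rw [← Fin.prod_congr' (fun i : Fin β.length => x (i.1 + 1) ^ β.blocksFun i) hcast]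
    apply Finset.prod_congr rfl
    intro j _
    rw [← pow_succ']
    congr 1
    exact Nat.succ_pred_eq_of_pos (β.one_le_blocksFun _)
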